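/- arXiv:2008.00233 — 2 statements merged into one kernel-verified Lean document; each statement's English description precedes it below -/
import Mathlib

section
/- Let a < b, α ∈ (0,1), and let m : ℝ → ℝ be continuous on [a,b]. Then the left Riemann–Liouville fractional derivative is a left inverse of the left Riemann–Liouville fractional integral of the same order: for every t ∈ (a,b), (D_{a+}^α (I_{a+}^α m))(t) = m(t). (This is the identity D_{a+}^α [^s I_{a+}^α X](t) = E[X(t)] for a second-order stochastic process X with continuous expectation function m = E∘X.) -/
open MeasureTheory Set intervalIntegral

/-- Left Riemann–Liouville fractional integral of order `α` with base point `a`: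
`(I_{a+}^α f)(t) = (1/Γ(α)) ∫_a^t (t-τ)^(α-1) f(τ) dτ`. -/
noncomputable def RLIl (a α : ℝ) (f : ℝ → ℝ) (t : ℝ) : ℝ :=
  (1 / Real.Gamma α) * ∫ τ in a..t, (t - τ) ^ (α - 1) * f τ

/-- Right Riemann–Liouville fractional integral of order `α` with base point `b`:
`(I_{b-}^α f)(t) = (1/Γ(α)) ∫_t^b (τ-t)^(α-1) f(τ) dτ`. -/
noncomputable def RLIr (b α : ℝ) (f : ℝ → ℝ) (t : ℝ) : ℝ :=
  (1 / Real.Gamma α) * ∫ τ in t..b, (τ - t) ^ (α - 1) * f τ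

/-- Left Riemann–Liouville fractional derivative of order `α ∈ (0,1)`:
`(D_{a+}^α f)(t) = d/dt (I_{a+}^{1-α} f)(t)`. -/
noncomputable def RLDl (a α : ℝ) (f : ℝ → ℝ) (t : ℝ) : ℝ :=
  deriv (RLIl a (1 - α) f) t

/-- Right Riemann–Liouville fractional derivative of order `α ∈ (0,1)`:
`(D_{b-}^α f)(t) = -d/dt (I_{b-}^{1-α} f)(t)`. -/
noncomputable def RLDr (b α : ℝ) (f : ℝ → ℝ) (t : ℝ) : ℝ :=
  - deriv (RLIr b (1 - α) f) t

/-- Left Caputo fractional derivative of order `α ∈ (0,1)`: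
`(^C D_{a+}^α f)(t) = (1/Γ(1-α)) ∫_a^t (t-τ)^(-α) f'(τ) dτ`. -/
noncomputable def CapDl (a α : ℝ) (f : ℝ → ℝ) (t : ℝ) : ℝ :=
  (1 / Real.Gamma (1 - α)) * ∫ τ in a..t, (t - τ) ^ (-α) * deriv f τ

/-- Right Caputo fractional derivative of order `α ∈ (0,1)`:
`(^C D_{b-}^α f)(t) = -(1/Γ(1-α)) ∫_t^b (τ-t)^(-α) f'(τ) dτ`. -/
noncomputable def CapDr (b α : ℝ) (f : ℝ → ℝ) (t : ℝ) : ℝ :=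
  -(1 / Real.Gamma (1 - α)) * ∫ τ in t..b, (τ - t) ^ (-α) * deriv f τ

/-! The semigroup law `I^q (I^p M) = I^(p+q) M` of Riemann–Liouville integrals turns
`D^α (I^α m) = d/dt I^(1-α) (I^α m)` into the derivative of `I^1 m = ∫_a^t m`, which is `m t`
by the fundamental theorem of calculus. The semigroup law is Dirichlet's formula: exchanging the
order of integration over the triangle `a < σ < τ ≤ s` leaves the inner integral
`∫_σ^s (s - τ)^(q-1) (τ - σ)^(p-1) dτ = B(p, q) (s - σ)^(p+q-1)`, a rescaled Beta integral. -/

open ProbabilityTheory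

theorem integral_rpow_mul_sub_rpow {p q c : ℝ} (hp : 0 < p) (hq : 0 < q) (hc : 0 < c) :
    ∫ x in (0 : ℝ)..c, x ^ (p - 1) * (c - x) ^ (q - 1) = c ^ (p + q - 1) * beta p q := by
  have h := Complex.betaIntegral_scaled p q hc
  rw [Complex.betaIntegral_eq_Gamma_mul_div _ _ (by simpa) (by simpa)] at h
  apply Complex.ofReal_injective
  rw [← intervalIntegral.integral_ofReal, beta]
  push_cast
  rw [← Complex.Gamma_ofReal, ← Complex.Gamma_ofReal, ← Complex.Gamma_ofReal,
    Complex.ofReal_cpow hc.le]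
  push_cast
  rw [← h]
  refine integral_congr fun x hx => ?_
  rw [uIcc_of_le hc.le] at hx
  simp only [Complex.ofReal_cpow hx.1, Complex.ofReal_cpow (sub_nonneg.2 hx.2)]
  push_cast
  ring

theorem integral_sub_rpow_mul_rpow_sub {p q σ s : ℝ} (hp : 0 < p) (hq : 0 < q) (hσs : σ < s) :
    ∫ τ in σ..s, (s - τ) ^ (q - 1) * (τ - σ) ^ (p - 1) = (s - σ) ^ (p + q - 1) * beta p q := by
  have h := integral_comp_sub_right (fun y => y ^ (p - 1) * ((s - σ) - y) ^ (q - 1)) σ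
    (a := σ) (b := s)
  simp only [sub_self, sub_sub_sub_cancel_right] at h
  rw [← integral_rpow_mul_sub_rpow hp hq (sub_pos.2 hσs), ← h]
  simp only [mul_comm]

theorem intervalIntegrable_sub_rpow_mul_rpow_sub {p q σ s : ℝ} (hp : 0 < p) (hq : 0 < q)
    (hσs : σ < s) :
    IntervalIntegrable (fun τ => (s - τ) ^ (q - 1) * (τ - σ) ^ (p - 1)) volume σ s := by
  -- a function that is not integrable has integral `0`
  refine intervalIntegrable_of_integral_ne_zero ?_
  rw [integral_sub_rpow_mul_rpow_sub hp hq hσs]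
  exact (mul_pos (Real.rpow_pos_of_pos (sub_pos.2 hσs) _) (beta_pos hp hq)).ne'

section Triangle

variable {E : Type*} [NormedAddCommGroup E] [NormedSpace ℝ E]

theorem setIntegral_Ioc_indicator_Ioi {a σ s : ℝ} (haσ : a ≤ σ) (hσs : σ ≤ s) (g : ℝ → E) :
    ∫ τ in Ioc a s, (Ioi σ).indicator g τ = ∫ τ in σ..s, g τ := by
  rw [setIntegral_indicator measurableSet_Ioi, Ioc_inter_Ioi, sup_eq_right.2 haσ,
    integral_of_le hσs]

theorem integral_integral_swap_triangle {a s : ℝ} (has : a ≤ s) {f : ℝ → ℝ → E}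
    (hf : Integrable (fun x : ℝ × ℝ => (Ioi x.2).indicator (fun τ => f τ x.2) x.1)
      ((volume.restrict (Ioc a s)).prod (volume.restrict (Ioc a s)))) :
    ∫ τ in a..s, ∫ σ in a..τ, f τ σ = ∫ σ in a..s, ∫ τ in σ..s, f τ σ := by
  have hslice : ∀ τ σ, (Ioi σ).indicator (fun τ => f τ σ) τ = (Iio τ).indicator (f τ) σ :=
    fun τ σ => by simp only [indicator_apply, mem_Ioi, mem_Iio]
  calc ∫ τ in a..s, ∫ σ in a..τ, f τ σ
      = ∫ τ in Ioc a s, ∫ σ in Ioc a s, (Ioi σ).indicator (fun τ => f τ σ) τ := by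
        rw [integral_of_le has]
        refine setIntegral_congr_fun measurableSet_Ioc fun τ hτ => ?_
        simp only [hslice]
        have hIoo : Ioc a s ∩ Iio τ = Ioo a τ := by
          ext σ
          simp only [mem_inter_iff, mem_Ioc, mem_Iio, mem_Ioo]
          grind
        rw [setIntegral_indicator measurableSet_Iio, hIoo, integral_of_le hτ.1.le,
          integral_Ioc_eq_integral_Ioo]
    _ = ∫ σ in Ioc a s, ∫ τ in Ioc a s, (Ioi σ).indicator (fun τ => f τ σ) τ :=
        integral_integral_swap hf
    _ = ∫ σ in a..s, ∫ τ in σ..s, f τ σ := by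
        rw [integral_of_le has]
        exact setIntegral_congr_fun measurableSet_Ioc fun σ hσ =>
          setIntegral_Ioc_indicator_Ioi hσ.1.le hσ.2 _

end Triangle

theorem setIntegral_norm_indicator_sub_rpow_mul_rpow_sub {a s p q σ : ℝ} (hp : 0 < p)
    (hq : 0 < q) (hσ : σ ∈ Ioo a s) (c : ℝ) :
    ∫ τ in Ioc a s, ‖(Ioi σ).indicator (fun τ => (s - τ) ^ (q - 1) * ((τ - σ) ^ (p - 1) * c)) τ‖
      = (s - σ) ^ (p + q - 1) * beta p q * ‖c‖ := by
  calc ∫ τ in Ioc a s, ‖(Ioi σ).indicator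
        (fun τ => (s - τ) ^ (q - 1) * ((τ - σ) ^ (p - 1) * c)) τ‖
      = ∫ τ in Ioc a s, (Ioi σ).indicator
        (fun τ => (s - τ) ^ (q - 1) * (τ - σ) ^ (p - 1) * ‖c‖) τ := by
        refine setIntegral_congr_fun measurableSet_Ioc fun τ hτ => ?_
        by_cases hστ : τ ∈ Ioi σ
        · rw [norm_indicator_eq_indicator_norm, indicator_of_mem hστ, indicator_of_mem hστ,
            norm_mul, norm_mul, Real.norm_of_nonneg (Real.rpow_nonneg (sub_nonneg.2 hτ.2) _),
            Real.norm_of_nonneg (Real.rpow_nonneg (sub_nonneg.2 (le_of_lt hστ)) _), mul_assoc]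
        · rw [indicator_of_notMem hστ, indicator_of_notMem hστ, norm_zero]
    _ = (s - σ) ^ (p + q - 1) * beta p q * ‖c‖ := by
        rw [setIntegral_Ioc_indicator_Ioi hσ.1.le hσ.2.le, intervalIntegral.integral_mul_const,
          integral_sub_rpow_mul_rpow_sub hp hq hσ.2]

theorem integrable_indicator_sub_rpow_mul_rpow_sub {a s p q : ℝ} (hp : 0 < p) (hq : 0 < q)
    (has : a ≤ s) {M : ℝ → ℝ} (hM : ContinuousOn M (Icc a s)) :
    Integrable (fun x : ℝ × ℝ =>
        (Ioi x.2).indicator (fun τ => (s - τ) ^ (q - 1) * ((τ - x.2) ^ (p - 1) * M x.2)) x.1)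
      ((volume.restrict (Ioc a s)).prod (volume.restrict (Ioc a s))) := by
  set μ := volume.restrict (Ioc a s)
  have hmeas : AEStronglyMeasurable (fun x : ℝ × ℝ =>
      (Ioi x.2).indicator (fun τ => (s - τ) ^ (q - 1) * ((τ - x.2) ^ (p - 1) * M x.2)) x.1)
      (μ.prod μ) := by
    have hM' : AEStronglyMeasurable M μ :=
      (hM.aestronglyMeasurable measurableSet_Icc).mono_measure
        (Measure.restrict_mono Ioc_subset_Icc_self le_rfl)
    change AEStronglyMeasurable ({x : ℝ × ℝ | x.2 < x.1}.indicator fun x =>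
      (s - x.1) ^ (q - 1) * ((x.1 - x.2) ^ (p - 1) * M x.2)) (μ.prod μ)
    refine AEStronglyMeasurable.indicator ?_ (measurableSet_lt measurable_snd measurable_fst)
    exact (by fun_prop : Measurable fun x : ℝ × ℝ => (s - x.1) ^ (q - 1)).aestronglyMeasurable.mul
      ((by fun_prop : Measurable fun x : ℝ × ℝ => (x.1 - x.2) ^ (p - 1)).aestronglyMeasurable.mul
        hM'.comp_snd)
  have hae : ∀ᵐ σ ∂μ, σ ∈ Ioo a s := by
    rw [show μ = volume.restrict (Ioo a s) from (Measure.restrict_congr_set Ioo_ae_eq_Ioc).symm]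
    exact ae_restrict_mem measurableSet_Ioo
  rw [integrable_prod_iff' hmeas]
  refine ⟨hae.mono fun σ hσ => ?_, ?_⟩
  · dsimp only
    rw [integrable_indicator_iff measurableSet_Ioi, IntegrableOn,
      Measure.restrict_restrict measurableSet_Ioi, inter_comm, Ioc_inter_Ioi,
      sup_eq_right.2 hσ.1.le, ← IntegrableOn]
    simpa only [mul_assoc] using
      ((intervalIntegrable_sub_rpow_mul_rpow_sub hp hq hσ.2).mul_const (M σ)).1
  · have hnorm : (fun σ => ∫ τ, ‖(Ioi σ).indicator
          (fun τ => (s - τ) ^ (q - 1) * ((τ - σ) ^ (p - 1) * M σ)) τ‖ ∂μ)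
        =ᵐ[μ] fun σ => (s - σ) ^ (p + q - 1) * beta p q * ‖M σ‖ := by
      filter_upwards [hae] with σ hσ
      exact setIntegral_norm_indicator_sub_rpow_mul_rpow_sub hp hq hσ (M σ)
    refine Integrable.congr ?_ hnorm.symm
    have hrpow : IntervalIntegrable (fun σ => (s - σ) ^ (p + q - 1)) volume a s := by
      have hr : -1 < p + q - 1 := by linarith
      simpa only [sub_sub_cancel, sub_zero] using
        (intervalIntegrable_rpow' hr (a := s - a) (b := 0)).comp_sub_left s
    exact ((hrpow.mul_const _).mul_continuousOn (by rw [uIcc_of_le has]; exact hM.norm)).1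

theorem RLIl_RLIl {a s p q : ℝ} (hp : 0 < p) (hq : 0 < q) (has : a ≤ s) {M : ℝ → ℝ}
    (hM : ContinuousOn M (Icc a s)) :
    RLIl a q (RLIl a p M) s = RLIl a (p + q) M s := by
  have hbeta : ∀ σ ∈ Ioo a s, ∫ τ in σ..s, (s - τ) ^ (q - 1) * ((τ - σ) ^ (p - 1) * M σ)
      = beta p q * ((s - σ) ^ (p + q - 1) * M σ) := fun σ hσ => by
    simp only [← mul_assoc]
    rw [intervalIntegral.integral_mul_const, integral_sub_rpow_mul_rpow_sub hp hq hσ.2]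
    ring
  simp only [RLIl]
  calc 1 / Real.Gamma q * ∫ τ in a..s,
        (s - τ) ^ (q - 1) * (1 / Real.Gamma p * ∫ σ in a..τ, (τ - σ) ^ (p - 1) * M σ)
      = 1 / Real.Gamma q * (1 / Real.Gamma p) * ∫ τ in a..s, ∫ σ in a..τ,
          (s - τ) ^ (q - 1) * ((τ - σ) ^ (p - 1) * M σ) := by
        simp only [intervalIntegral.integral_const_mul, mul_left_comm _ (1 / Real.Gamma p)]
        ring
    _ = 1 / Real.Gamma q * (1 / Real.Gamma p) * ∫ σ in a..s, ∫ τ in σ..s,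
          (s - τ) ^ (q - 1) * ((τ - σ) ^ (p - 1) * M σ) := by
        rw [integral_integral_swap_triangle has
          (integrable_indicator_sub_rpow_mul_rpow_sub hp hq has hM)]
    _ = 1 / Real.Gamma q * (1 / Real.Gamma p) * ∫ σ in a..s,
          beta p q * ((s - σ) ^ (p + q - 1) * M σ) := by
        simp only [integral_of_le has, integral_Ioc_eq_integral_Ioo]
        rw [setIntegral_congr_fun measurableSet_Ioo hbeta]
    _ = 1 / Real.Gamma (p + q) * ∫ σ in a..s, (s - σ) ^ (p + q - 1) * M σ := by
        rw [intervalIntegral.integral_const_mul, beta]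
        field_simp [(Real.Gamma_pos_of_pos hp).ne', (Real.Gamma_pos_of_pos hq).ne']

theorem RLIl_one (a : ℝ) (f : ℝ → ℝ) (t : ℝ) : RLIl a 1 f t = ∫ τ in a..t, f τ := by
  simp [RLIl]

theorem RL_derivative_left_inverse_of_integral_general (a b α : ℝ)
    (hα : α ∈ Set.Ioo (0 : ℝ) 1) (m : ℝ → ℝ) (hm : ContinuousOn m (Set.Icc a b)) :
    ∀ t ∈ Set.Ioo a b, RLDl a α (RLIl a α m) t = m t := by
  intro t ht
  have hI : RLIl a (1 - α) (RLIl a α m) =ᶠ[nhds t] fun s => ∫ τ in a..s, m τ := by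
    filter_upwards [Ioo_mem_nhds ht.1 ht.2] with s hs
    rw [RLIl_RLIl hα.1 (sub_pos.2 hα.2) hs.1.le (hm.mono (Icc_subset_Icc_right hs.2.le)),
      add_sub_cancel, RLIl_one]
  have hFTC : HasDerivAt (fun s => ∫ τ in a..s, m τ) (m t) t :=
    integral_hasDerivAt_right
      ((hm.mono (Icc_subset_Icc_right ht.2.le)).intervalIntegrable_of_Icc ht.1.le)
      ((hm.mono Ioo_subset_Icc_self).stronglyMeasurableAtFilter isOpen_Ioo t ht)
      (hm.continuousAt (Icc_mem_nhds ht.1 ht.2))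
  rw [RLDl, hI.deriv_eq, hFTC.deriv]

/-- The left Riemann–Liouville fractional derivative is a left inverse of the left
Riemann–Liouville fractional integral of the same order `α ∈ (0,1)`:
for continuous `m` on `[a,b]` and every `t ∈ (a,b)`, `(D_{a+}^α (I_{a+}^α m))(t) = m(t)`. -/
theorem RL_derivative_left_inverse_of_integral (a b α : ℝ) (hab : a < b)
    (hα : α ∈ Set.Ioo (0 : ℝ) 1) (m : ℝ → ℝ) (hm : ContinuousOn m (Set.Icc a b)) :
    ∀ t ∈ Set.Ioo a b, RLDl a α (RLIl a α m) t = m t :=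
  RL_derivative_left_inverse_of_integral_general a b α hα m hm
end

section
/- (Fundamental lemma of the stochastic calculus of variations.) Let a < b, let (Ω,F,P) be a probability space, and let Y : [a,b] × Ω → ℝ be a jointly measurable second-order stochastic process with continuous sample paths such that (t,ω) ↦ Y(t,ω) is integrable on [a,b] × Ω. If E[∫_a^b Y(t)·η(t) dt] = 0 for every jointly measurable second-order stochastic process η : [a,b] × Ω → ℝ with continuous sample paths for which the product is integrable, then Y(t) = 0 almost surely for every t ∈ [a,b]. -/
open MeasureTheory Set intervalIntegral

/-! Test the hypothesis against the bounded process `η = clamp ∘ Y`. Then `Y η ≥ 0` with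
equality only where `Y = 0`, so by Fubini the vanishing of `E[∫ Y η]` forces `Y = 0` almost
everywhere on `[a,b] × Ω`. Swapping the order of the two "almost everywhere", almost every sample
path vanishes almost everywhere on `[a,b]`, hence, being continuous, everywhere on `[a,b]`. -/

def clamp (y : ℝ) : ℝ := max (-1) (min 1 y)

lemma continuous_clamp : Continuous clamp :=
  continuous_const.max (continuous_const.min continuous_id)

lemma abs_clamp_le_one (y : ℝ) : |clamp y| ≤ 1 :=
  abs_le.2 ⟨le_max_left _ _, max_le (by norm_num) (min_le_left _ _)⟩

lemma mul_clamp_self_nonneg (y : ℝ) : 0 ≤ y * clamp y := by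
  rcases le_total 0 y with hy | hy
  · exact mul_nonneg hy (le_max_of_le_right (le_min zero_le_one hy))
  · exact mul_nonneg_of_nonpos_of_nonpos hy
      (max_le (by norm_num) ((min_le_right _ _).trans hy))

lemma mul_clamp_self_eq_zero_iff {y : ℝ} : y * clamp y = 0 ↔ y = 0 := by
  refine ⟨fun h => ?_, fun h => by simp [h]⟩
  rcases mul_eq_zero.1 h with hy | hc
  · exact hy
  · by_contra hy
    rcases lt_or_gt_of_ne hy with hy | hy
    · exact (max_lt (by norm_num) ((min_le_right _ _).trans_lt hy)).ne hc
    · exact (lt_max_of_lt_right (lt_min one_pos hy)).ne' hc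

section Integration

variable {α : Type*} [MeasurableSpace α] {μ : Measure α} {f : α → ℝ}

lemma MeasureTheory.Integrable.mul_clamp (hf : Integrable f μ) :
    Integrable (fun x => f x * clamp (f x)) μ :=
  hf.mul_bdd (continuous_clamp.comp_aestronglyMeasurable hf.1)
    (Filter.Eventually.of_forall fun x => abs_clamp_le_one (f x))

lemma ae_eq_zero_of_integral_mul_clamp_eq_zero (hf : Integrable f μ)
    (h : ∫ x, f x * clamp (f x) ∂μ = 0) : ∀ᵐ x ∂μ, f x = 0 := by
  have hprod : (fun x => f x * clamp (f x)) =ᵐ[μ] 0 :=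
    (integral_eq_zero_iff_of_nonneg (fun x => mul_clamp_self_nonneg (f x)) hf.mul_clamp).1 h
  filter_upwards [hprod] with x hx using mul_clamp_self_eq_zero_iff.1 hx

end Integration

lemma integral_prod_restrict_Icc_eq_integral_intervalIntegral {Ω : Type*} [MeasurableSpace Ω]
    {P : Measure Ω} [SFinite P] {a b : ℝ} (hab : a ≤ b) {F : ℝ → Ω → ℝ}
    (hF : Integrable (fun p : ℝ × Ω => F p.1 p.2) ((volume.restrict (Icc a b)).prod P)) :
    ∫ p : ℝ × Ω, F p.1 p.2 ∂((volume.restrict (Icc a b)).prod P) =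
      ∫ ω, (∫ t in a..b, F t ω) ∂P := by
  rw [integral_prod_symm _ hF]
  simp_rw [integral_of_le hab, integral_Icc_eq_integral_Ioc]

lemma ae_forall_mem_eq_zero_of_ae_prod {X Ω : Type*} [TopologicalSpace X] [MeasurableSpace X]
    [MeasurableSpace Ω] {μ : Measure X} [μ.IsOpenPosMeasure] [SFinite μ] {P : Measure Ω}
    [SFinite P] {s : Set X} (hs : s ⊆ closure (interior s)) {Y : X → Ω → ℝ}
    (hY : Measurable (Function.uncurry Y)) (hcont : ∀ ω, ContinuousOn (fun t => Y t ω) s)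
    (h : ∀ᵐ p ∂(μ.restrict s).prod P, Y p.1 p.2 = 0) :
    ∀ᵐ ω ∂P, ∀ t ∈ s, Y t ω = 0 := by
  have hmeas : MeasurableSet {p : X × Ω | Y p.1 p.2 = 0} :=
    measurableSet_eq_fun hY measurable_const
  have hpaths : ∀ᵐ ω ∂P, ∀ᵐ t ∂μ.restrict s, Y t ω = 0 :=
    (Measure.ae_ae_comm hmeas).1 (Measure.ae_ae_of_ae_prod h)
  filter_upwards [hpaths] with ω hω
  exact Measure.eqOn_of_ae_eq hω (hcont ω) continuousOn_const hs

theorem fundamental_lemma_stochastic_calculus_of_variations_general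
    {Ω : Type*} [MeasurableSpace Ω] (P : Measure Ω) [IsProbabilityMeasure P]
    (a b : ℝ) (hab : a < b) (Y : ℝ → Ω → ℝ)
    (hYmeas : Measurable (Function.uncurry Y))
    (hYcont : ∀ ω, ContinuousOn (fun t => Y t ω) (Set.Icc a b))
    (hYint : Integrable (fun p : ℝ × Ω => Y p.1 p.2)
      ((volume.restrict (Set.Icc a b)).prod P))
    (h : ∀ η : ℝ → Ω → ℝ, Measurable (Function.uncurry η) →
      (∀ t ∈ Set.Icc a b, MemLp (η t) 2 P) →
      (∀ ω, ContinuousOn (fun t => η t ω) (Set.Icc a b)) →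
      Integrable (fun p : ℝ × Ω => Y p.1 p.2 * η p.1 p.2)
        ((volume.restrict (Set.Icc a b)).prod P) →
      ∫ ω, (∫ t in a..b, Y t ω * η t ω) ∂P = 0) :
    ∀ t ∈ Set.Icc a b, ∀ᵐ ω ∂P, Y t ω = 0 := by
  have hηmeas : Measurable (Function.uncurry fun t ω => clamp (Y t ω)) :=
    continuous_clamp.measurable.comp hYmeas
  have hη2 : ∀ t ∈ Icc a b, MemLp (fun ω => clamp (Y t ω)) 2 P := fun t _ =>
    MemLp.of_bound (hηmeas.comp measurable_prodMk_left).aestronglyMeasurable 1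
      (Filter.Eventually.of_forall fun ω => abs_clamp_le_one (Y t ω))
  have hηcont : ∀ ω, ContinuousOn (fun t => clamp (Y t ω)) (Icc a b) := fun ω =>
    continuous_clamp.comp_continuousOn (hYcont ω)
  have hint := hYint.mul_clamp
  have hzero := h _ hηmeas hη2 hηcont hint
  rw [← integral_prod_restrict_Icc_eq_integral_intervalIntegral hab.le hint] at hzero
  have hpaths : ∀ᵐ ω ∂P, ∀ t ∈ Icc a b, Y t ω = 0 :=
    ae_forall_mem_eq_zero_of_ae_prod (closure_interior_Icc hab.ne).symm.subset hYmeas hYcont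
      (ae_eq_zero_of_integral_mul_clamp_eq_zero hYint hzero)
  exact fun t ht => hpaths.mono fun ω hω => hω t ht

/-- Fundamental lemma of the stochastic calculus of variations: if `Y` is a jointly
measurable second-order stochastic process on `[a,b]` with continuous sample paths,
integrable on `[a,b] × Ω`, and `E[∫_a^b Y(t)·η(t) dt] = 0` for every jointly measurable
second-order process `η` with continuous sample paths (for which the product is
integrable), then `Y(t) = 0` almost surely for every `t ∈ [a,b]`. -/
theorem fundamental_lemma_stochastic_calculus_of_variations
    {Ω : Type*} [MeasurableSpace Ω] (P : Measure Ω) [IsProbabilityMeasure P]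
    (a b : ℝ) (hab : a < b) (Y : ℝ → Ω → ℝ)
    (hYmeas : Measurable (Function.uncurry Y))
    (hY2 : ∀ t ∈ Set.Icc a b, MemLp (Y t) 2 P)
    (hYcont : ∀ ω, ContinuousOn (fun t => Y t ω) (Set.Icc a b))
    (hYint : Integrable (fun p : ℝ × Ω => Y p.1 p.2)
      ((volume.restrict (Set.Icc a b)).prod P))
    (h : ∀ η : ℝ → Ω → ℝ, Measurable (Function.uncurry η) →
      (∀ t ∈ Set.Icc a b, MemLp (η t) 2 P) →
      (∀ ω, ContinuousOn (fun t => η t ω) (Set.Icc a b)) →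
      Integrable (fun p : ℝ × Ω => Y p.1 p.2 * η p.1 p.2)
        ((volume.restrict (Set.Icc a b)).prod P) →
      ∫ ω, (∫ t in a..b, Y t ω * η t ω) ∂P = 0) :
    ∀ t ∈ Set.Icc a b, ∀ᵐ ω ∂P, Y t ω = 0 :=
  fundamental_lemma_stochastic_calculus_of_variations_general P a b hab Y hYmeas hYcont hYint h
end
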